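/- arXiv:1907.02803 — 2 statements merged into one kernel-verified Lean document; each statement's English description precedes it below -/
import Mathlib

section
/- There exist a natural number m ≥ 2 and a real constant c with 0 < c < 1/2, depending only on the dimension N, such that for every r > 0 there are finitely many subsets F₁, …, F_m of the unit sphere S of ℝ^{2N} (equivalently ℂ^N) satisfying: (i) for every j and all distinct p, q ∈ F_j, |p − q| ≥ r; and (ii) the union F = F₁ ∪ … ∪ F_m is nonempty and every point p of the sphere satisfies dist(p, F) ≤ c·r. -/
open Metric Set MeasureTheory
open scoped ENNReal

/-- Volume packing bound: a `ρ`-separated finite set inside the closed ball of radius `R`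
around `x` in `ℝ^d` has at most `(R+ρ)^d / (ρ/2)^d` elements. -/
lemma packing_bound (d : ℕ) (s : Finset (EuclideanSpace ℝ (Fin d)))
    (x : EuclideanSpace ℝ (Fin d)) (R ρ : ℝ) (hρ : 0 < ρ) (hR : 0 ≤ R)
    (hb : ∀ p ∈ s, dist p x ≤ R)
    (hsep : ∀ p ∈ s, ∀ q ∈ s, p ≠ q → ρ ≤ dist p q) :
    (s.card : ℝ) * (ρ / 2) ^ d ≤ (R + ρ) ^ d := by
  classical
  set B := volume (ball (0 : EuclideanSpace ℝ (Fin d)) 1) with hBdef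
  have hB0 : B ≠ 0 := (measure_ball_pos _ _ one_pos).ne'
  have hBt : B ≠ ⊤ := measure_ball_lt_top.ne
  have hvol : ∀ p : EuclideanSpace ℝ (Fin d),
      volume (ball p (ρ / 2)) = ENNReal.ofReal ((ρ / 2) ^ d) * B := by
    intro p
    rw [Measure.addHaar_ball_of_pos volume p (by positivity : (0:ℝ) < ρ / 2),
      finrank_euclideanSpace_fin]
  have hdisj : (↑s : Set (EuclideanSpace ℝ (Fin d))).PairwiseDisjoint
      (fun p => ball p (ρ / 2)) := by
    intro p hp q hq hpq
    exact ball_disjoint_ball (by linarith [hsep p hp q hq hpq])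
  have hsum : volume (⋃ p ∈ s, ball p (ρ / 2))
      = ∑ p ∈ s, volume (ball p (ρ / 2)) :=
    measure_biUnion_finset hdisj fun p _ => measurableSet_ball
  have hsub : (⋃ p ∈ s, ball p (ρ / 2)) ⊆ ball x (R + ρ) := by
    intro y hy
    simp only [Set.mem_iUnion] at hy
    obtain ⟨p, hp, hyp⟩ := hy
    have h1 : dist y p < ρ / 2 := mem_ball.mp hyp
    have h2 : dist p x ≤ R := hb p hp
    have : dist y x < R + ρ := by
      calc dist y x ≤ dist y p + dist p x := dist_triangle _ _ _
        _ < R + ρ := by linarith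
    exact mem_ball.mpr this
  have hballvol : volume (ball x (R + ρ)) = ENNReal.ofReal ((R + ρ) ^ d) * B := by
    rw [Measure.addHaar_ball_of_pos volume x (by linarith : (0:ℝ) < R + ρ),
      finrank_euclideanSpace_fin]
  have hchain : (s.card : ℝ≥0∞) * (ENNReal.ofReal ((ρ / 2) ^ d) * B)
      ≤ ENNReal.ofReal ((R + ρ) ^ d) * B := by
    calc (s.card : ℝ≥0∞) * (ENNReal.ofReal ((ρ / 2) ^ d) * B)
        = ∑ _p ∈ s, (ENNReal.ofReal ((ρ / 2) ^ d) * B) := by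
          rw [Finset.sum_const, nsmul_eq_mul]
      _ = ∑ p ∈ s, volume (ball p (ρ / 2)) := by
          exact Finset.sum_congr rfl fun p _ => (hvol p).symm
      _ = volume (⋃ p ∈ s, ball p (ρ / 2)) := hsum.symm
      _ ≤ volume (ball x (R + ρ)) := measure_mono hsub
      _ = ENNReal.ofReal ((R + ρ) ^ d) * B := hballvol
  rw [← mul_assoc] at hchain
  have hcancel : (s.card : ℝ≥0∞) * ENNReal.ofReal ((ρ / 2) ^ d)
      ≤ ENNReal.ofReal ((R + ρ) ^ d) :=
    (ENNReal.mul_le_mul_iff_left hB0 hBt).mp hchain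
  have hcast : (s.card : ℝ≥0∞) * ENNReal.ofReal ((ρ / 2) ^ d)
      = ENNReal.ofReal ((s.card : ℝ) * (ρ / 2) ^ d) := by
    rw [ENNReal.ofReal_mul (by positivity : (0:ℝ) ≤ (s.card : ℝ))]
    congr 1
    exact (ENNReal.ofReal_natCast _).symm
  rw [hcast] at hcancel
  exact (ENNReal.ofReal_le_ofReal_iff (by positivity)).mp hcancel

/-- A `ρ`-separated subset of a ball in `ℝ^d` is finite. -/
lemma separated_finite {d : ℕ} {A : Set (EuclideanSpace ℝ (Fin d))}
    {x : EuclideanSpace ℝ (Fin d)} {R ρ : ℝ} (hρ : 0 < ρ) (hR : 0 ≤ R)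
    (hb : ∀ p ∈ A, dist p x ≤ R)
    (hsep : ∀ p ∈ A, ∀ q ∈ A, p ≠ q → ρ ≤ dist p q) : A.Finite := by
  by_contra hinf
  have hinf' : A.Infinite := hinf
  obtain ⟨t, hts, htc⟩ := hinf'.exists_subset_card_eq (⌈(R + ρ) ^ d / (ρ / 2) ^ d⌉₊ + 1)
  have hp := packing_bound d t x R ρ hρ hR (fun p hp => hb p (hts hp))
    (fun p hp q hq hpq => hsep p (hts hp) q (hts hq) hpq)
  rw [htc] at hp
  have h2 : (0:ℝ) < (ρ / 2) ^ d := by positivity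
  have h3 : ((⌈(R + ρ) ^ d / (ρ / 2) ^ d⌉₊ + 1 : ℕ) : ℝ)
      ≤ (R + ρ) ^ d / (ρ / 2) ^ d := by
    rw [le_div_iff₀ h2]; exact_mod_cast hp
  have h4 := h3.trans (Nat.le_ceil _)
  have h5 : (⌈(R + ρ) ^ d / (ρ / 2) ^ d⌉₊ + 1 : ℕ) ≤ ⌈(R + ρ) ^ d / (ρ / 2) ^ d⌉₊ := by
    exact_mod_cast h4
  omega

/-- A maximal `ρ`-separated subset of `S` exists (Zorn), and it is a `ρ`-net of `S`. -/
lemma exists_maximal_separated {E : Type*} [MetricSpace E] (ρ : ℝ) (hρ : 0 < ρ)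
    (S : Set E) :
    ∃ G ⊆ S, (∀ p ∈ G, ∀ q ∈ G, p ≠ q → ρ ≤ dist p q) ∧
      ∀ p ∈ S, ∃ q ∈ G, dist p q ≤ ρ := by
  set 𝒮 : Set (Set E) := {A | A ⊆ S ∧ ∀ p ∈ A, ∀ q ∈ A, p ≠ q → ρ ≤ dist p q} with h𝒮
  have hzorn : ∀ c ⊆ 𝒮, IsChain (· ⊆ ·) c → c.Nonempty →
      ∃ ub ∈ 𝒮, ∀ s ∈ c, s ⊆ ub := by
    intro c hcS hchain _
    refine ⟨⋃₀ c, ⟨sUnion_subset fun s hs => (hcS hs).1, ?_⟩,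
      fun s hs => subset_sUnion_of_mem hs⟩
    intro p hp q hq hpq
    obtain ⟨s, hs, hps⟩ := hp
    obtain ⟨t, ht, hqt⟩ := hq
    by_cases hst : s = t
    · subst hst; exact (hcS hs).2 p hps q hqt hpq
    · rcases hchain hs ht hst with h | h
      · exact (hcS ht).2 p (h hps) q hqt hpq
      · exact (hcS hs).2 p hps q (h hqt) hpq
  obtain ⟨G, -, hmax⟩ := zorn_subset_nonempty 𝒮 hzorn ∅ ⟨empty_subset _, by simp⟩
  refine ⟨G, hmax.prop.1, hmax.prop.2, ?_⟩
  intro p hp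
  by_contra h
  push_neg at h
  have hpG : p ∉ G := by
    intro hpG
    have := h p hpG
    rw [dist_self] at this
    linarith
  have hins : insert p G ∈ 𝒮 := by
    refine ⟨insert_subset hp hmax.prop.1, ?_⟩
    intro a ha b hb hab
    rcases mem_insert_iff.mp ha with rfl | haG
    · rcases mem_insert_iff.mp hb with rfl | hbG
      · exact absurd rfl hab
      · exact (h b hbG).le
    · rcases mem_insert_iff.mp hb with rfl | hbG
      · rw [dist_comm]; exact (h a haG).le
      · exact hmax.prop.2 a haG b hbG hab
  have hsub := hmax.2 hins (subset_insert p G)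
  exact hpG (hsub (mem_insert p G))

/-- There exist `m ≥ 2` and `0 < c < 1/2`, depending only on `N`, such that for every
`r > 0` there are finitely many subsets `F 0, …, F (m-1)` of the unit sphere of
`ℝ^{2N}` that are `r`-separated and whose union is a nonempty `c·r`-net of the sphere. -/
theorem labyrinth_net (N : ℕ) (hN : 0 < N) :
    ∃ m : ℕ, 2 ≤ m ∧ ∃ c : ℝ, 0 < c ∧ c < 1 / 2 ∧
      ∀ r : ℝ, 0 < r →
        ∃ F : Fin m → Set (EuclideanSpace ℝ (Fin (2 * N))),
          (∀ j, (F j).Finite) ∧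
          (∀ j, F j ⊆ sphere (0 : EuclideanSpace ℝ (Fin (2 * N))) 1) ∧
          (∀ j, ∀ p ∈ F j, ∀ q ∈ F j, p ≠ q → r ≤ dist p q) ∧
          (⋃ j, F j).Nonempty ∧
          (∀ p ∈ sphere (0 : EuclideanSpace ℝ (Fin (2 * N))) 1,
            infDist p (⋃ j, F j) ≤ c * r) := by
  classical
  set d : ℕ := 2 * N with hd
  set m : ℕ := 10 ^ d with hm
  have hm2 : 2 ≤ m := by
    have : 10 ≤ 10 ^ d := Nat.le_self_pow (by omega) 10
    omega
  refine ⟨m, hm2, 1 / 4, by norm_num, by norm_num, ?_⟩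
  intro r hr
  -- maximal (r/4)-separated set on the sphere
  obtain ⟨G, hGs, hGsep, hGnet⟩ := exists_maximal_separated (r / 4) (by linarith)
    (sphere (0 : EuclideanSpace ℝ (Fin d)) 1)
  have hGball : ∀ p ∈ G, dist p (0 : EuclideanSpace ℝ (Fin d)) ≤ 1 := by
    intro p hp
    exact le_of_eq (mem_sphere.mp (hGs hp))
  have hGfin : G.Finite :=
    separated_finite (by linarith : (0:ℝ) < r / 4) zero_le_one hGball hGsep
  set GF : Finset (EuclideanSpace ℝ (Fin d)) := hGfin.toFinset with hGF
  have hGFcoe : (↑GF : Set (EuclideanSpace ℝ (Fin d))) = G := hGfin.coe_toFinset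
  -- greedy extraction of maximal-cardinality r-separated subsets
  have hchoose : ∀ A : Finset (EuclideanSpace ℝ (Fin d)),
      ∃ B : Finset (EuclideanSpace ℝ (Fin d)), B ⊆ A ∧
        (∀ p ∈ B, ∀ q ∈ B, p ≠ q → r ≤ dist p q) ∧
        (∀ g ∈ A, g ∉ B → ∃ p ∈ B, dist g p < r) := by
    intro A
    obtain ⟨B, hBmem, hBmax⟩ := Finset.exists_max_image
      (A.powerset.filter fun t => ∀ p ∈ t, ∀ q ∈ t, p ≠ q → r ≤ dist p q)
      Finset.card ⟨∅, by simp⟩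
    rw [Finset.mem_filter, Finset.mem_powerset] at hBmem
    obtain ⟨hBA, hBsep⟩ := hBmem
    refine ⟨B, hBA, hBsep, ?_⟩
    intro g hgA hgB
    by_contra hcon
    push_neg at hcon
    have hins : insert g B ∈ A.powerset.filter
        fun t => ∀ p ∈ t, ∀ q ∈ t, p ≠ q → r ≤ dist p q := by
      rw [Finset.mem_filter, Finset.mem_powerset]
      refine ⟨Finset.insert_subset hgA hBA, ?_⟩
      intro p hp q hq hpq
      rcases Finset.mem_insert.mp hp with rfl | hpB
      · rcases Finset.mem_insert.mp hq with rfl | hqB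
        · exact absurd rfl hpq
        · exact hcon q hqB
      · rcases Finset.mem_insert.mp hq with rfl | hqB
        · rw [dist_comm]; exact hcon p hpB
        · exact hBsep p hpB q hqB hpq
    have hcard := hBmax _ hins
    rw [Finset.card_insert_of_notMem hgB] at hcard
    omega
  choose step hstep_sub hstep_sep hstep_max using hchoose
  -- the residual sets
  set Gseq : ℕ → Finset (EuclideanSpace ℝ (Fin d)) :=
    fun n => Nat.rec GF (fun _ A => A \ step A) n with hGseq
  have hGsucc : ∀ n, Gseq (n + 1) = Gseq n \ step (Gseq n) := fun n => rfl
  have hmono : ∀ i k, Gseq (i + k) ⊆ Gseq i := by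
    intro i k
    induction k with
    | zero => exact Finset.Subset.refl _
    | succ k ih =>
      have : Gseq (i + (k + 1)) = Gseq (i + k) \ step (Gseq (i + k)) := hGsucc _
      rw [this]
      exact (Finset.sdiff_subset).trans ih
  have hmono' : ∀ i j, i ≤ j → Gseq j ⊆ Gseq i := by
    intro i j hij
    obtain ⟨k, rfl⟩ := Nat.exists_eq_add_of_le hij
    exact hmono i k
  have hGseqG : ∀ n, ∀ g ∈ Gseq n, g ∈ G := by
    intro n g hg
    have : g ∈ Gseq 0 := hmono' 0 n (Nat.zero_le _) hg
    rw [← hGFcoe]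
    exact this
  -- termination: Gseq m is empty
  have hkey : ∀ g, g ∉ Gseq m := by
    intro g hg
    have hpick : ∀ i : Fin m, ∃ p ∈ step (Gseq i), dist g p < r := by
      intro i
      have hgi1 : g ∈ Gseq (i + 1) := hmono' (i + 1) m i.2 hg
      rw [hGsucc, Finset.mem_sdiff] at hgi1
      exact hstep_max (Gseq i) g hgi1.1 hgi1.2
    choose p hpF hpd using hpick
    have hgnotF : ∀ i : Fin m, g ∉ step (Gseq i) := by
      intro i hgF
      have hgi1 : g ∈ Gseq (i + 1) := hmono' (i + 1) m i.2 hg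
      rw [hGsucc, Finset.mem_sdiff] at hgi1
      exact hgi1.2 hgF
    have hpG : ∀ i : Fin m, p i ∈ G :=
      fun i => hGseqG i _ (hstep_sub (Gseq i) (hpF i))
    have hgG : g ∈ G := hGseqG m g hg
    have hgne : ∀ i : Fin m, g ≠ p i := by
      intro i he
      exact hgnotF i (he ▸ hpF i)
    have hpinj : Function.Injective p := by
      intro i j hij
      by_contra hne
      have hlt : i < j ∨ j < i := Ne.lt_or_gt hne
      rcases hlt with h | h
      · have h1 : p j ∈ Gseq (↑i + 1) := hmono' (↑i + 1) j h (hstep_sub (Gseq j) (hpF j))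
        rw [hGsucc, Finset.mem_sdiff] at h1
        exact h1.2 (hij ▸ hpF i)
      · have h1 : p i ∈ Gseq (↑j + 1) := hmono' (↑j + 1) i h (hstep_sub (Gseq i) (hpF i))
        rw [hGsucc, Finset.mem_sdiff] at h1
        exact h1.2 (hij ▸ hpF j)
    set s : Finset (EuclideanSpace ℝ (Fin d)) :=
      insert g (Finset.univ.image p) with hs
    have hginim : g ∉ Finset.univ.image p := by
      rw [Finset.mem_image]
      rintro ⟨i, -, he⟩
      exact hgne i he.symm
    have hscard : s.card = m + 1 := by
      rw [hs, Finset.card_insert_of_notMem hginim,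
        Finset.card_image_of_injective _ hpinj, Finset.card_univ, Fintype.card_fin]
    have hsmemG : ∀ q ∈ s, q ∈ G := by
      intro q hq
      rcases Finset.mem_insert.mp hq with rfl | hq'
      · exact hgG
      · obtain ⟨i, -, rfl⟩ := Finset.mem_image.mp hq'
        exact hpG i
    have hsball : ∀ q ∈ s, dist q g ≤ r := by
      intro q hq
      rcases Finset.mem_insert.mp hq with rfl | hq'
      · rw [dist_self]; linarith
      · obtain ⟨i, -, rfl⟩ := Finset.mem_image.mp hq'
        rw [dist_comm]
        exact (hpd i).le
    have hssep : ∀ a ∈ s, ∀ b ∈ s, a ≠ b → r / 4 ≤ dist a b :=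
      fun a ha b hb hab => hGsep a (hsmemG a ha) b (hsmemG b hb) hab
    have hpk := packing_bound d s g r (r / 4) (by linarith) hr.le hsball hssep
    rw [hscard] at hpk
    have h8 : (0:ℝ) < (r / 4 / 2) ^ d := by positivity
    have h9 : (r + r / 4) ^ d = 10 ^ d * (r / 4 / 2) ^ d := by
      rw [← mul_pow]; ring_nf
    rw [h9] at hpk
    have h10 : ((m + 1 : ℕ) : ℝ) ≤ 10 ^ d := le_of_mul_le_mul_right hpk h8
    have h11 : ((m + 1 : ℕ) : ℝ) ≤ ((10 ^ d : ℕ) : ℝ) := by push_cast; exact_mod_cast h10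
    have h12 : m + 1 ≤ 10 ^ d := Nat.cast_le.mp h11
    omega
  -- every element of GF lies in some step
  have hcov0 : ∀ k, ∀ g ∈ GF, g ∉ Gseq k → ∃ i, i < k ∧ g ∈ step (Gseq i) := by
    intro k
    induction k with
    | zero => intro g hg hg'; exact absurd hg hg'
    | succ k ih =>
      intro g hg hg'
      by_cases h : g ∈ Gseq k
      · rw [hGsucc, Finset.mem_sdiff] at hg'
        push_neg at hg'
        exact ⟨k, Nat.lt_succ_self k, hg' h⟩
      · obtain ⟨i, hi, h2⟩ := ih g hg h
        exact ⟨i, Nat.lt_succ_of_lt hi, h2⟩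
  have hcover : ∀ g ∈ G, ∃ i : Fin m, g ∈ step (Gseq i) := by
    intro g hg
    have hgGF : g ∈ GF := by rw [← hGFcoe] at hg; exact hg
    obtain ⟨i, hi, h2⟩ := hcov0 m g hgGF (hkey g)
    exact ⟨⟨i, hi⟩, h2⟩
  -- the final family
  refine ⟨fun j => ↑(step (Gseq j)), ?_, ?_, ?_, ?_, ?_⟩
  · intro j; exact (step (Gseq j)).finite_toSet
  · intro j q hq
    exact hGs (hGseqG j _ (hstep_sub (Gseq j) hq))
  · intro j p hp q hq hpq
    exact hstep_sep (Gseq j) p hp q hq hpq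
  · -- nonempty
    have hi0 : (0 : ℕ) < d := by omega
    set x0 : EuclideanSpace ℝ (Fin d) := EuclideanSpace.single ⟨0, hi0⟩ (1 : ℝ) with hx0
    have hx0s : x0 ∈ sphere (0 : EuclideanSpace ℝ (Fin d)) 1 := by
      rw [mem_sphere, dist_zero_right, hx0, EuclideanSpace.norm_single]
      norm_num
    obtain ⟨q, hqG, -⟩ := hGnet x0 hx0s
    obtain ⟨i, hi⟩ := hcover q hqG
    exact ⟨q, Set.mem_iUnion.mpr ⟨i, hi⟩⟩
  · intro p hp
    obtain ⟨q, hqG, hdq⟩ := hGnet p hp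
    obtain ⟨i, hi⟩ := hcover q hqG
    have hqU : q ∈ ⋃ j : Fin m, (↑(step (Gseq j)) :
        Set (EuclideanSpace ℝ (Fin d))) := Set.mem_iUnion.mpr ⟨i, hi⟩
    calc infDist p (⋃ j : Fin m, (↑(step (Gseq j)) : Set (EuclideanSpace ℝ (Fin d))))
        ≤ dist p q := infDist_le_dist_of_mem hqU
      _ ≤ r / 4 := hdq
      _ = 1 / 4 * r := by ring
end

section
/- Let K₁, K₂, …, K_n be compact subsets of ℂ^N, each polynomially convex, and suppose that for every i, the set K_i is separated by a real affine hyperplane from K₁ ∪ … ∪ K_{i−1} (i.e. K_i and the union of the previous sets lie in the two distinct open half-spaces of some hyperplane). Then K₁ ∪ … ∪ K_n is polynomially convex. -/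
/-!
It suffices to add the sets one at a time, i.e. to prove Kallin's lemma: if `A` and `B` are
polynomially convex compact sets and `re L < 0` on `A`, `re L > 0` on `B` for a polynomial `L`
(here a complex affine function whose real part defines the hyperplane), then `A ∪ B` is
polynomially convex. If `z` lay in the hull of `A ∪ B` but not in `A ∪ B`, there would be
polynomials `P₁`, `P₂` with `P₁ z = P₂ z = 1`, `‖P₁‖ ≤ 1/4` on `A` and `‖P₂‖ ≤ 1/4` on `B`.
By Runge's theorem in one variable there is a polynomial `f` close to `1` on `L(A)` and to `0`
on `L(B)`; testing the hull with `P₁ f(L)` and `P₂ (1 - f(L))` bounds both `‖f(L z)‖` and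
`‖1 - f(L z)‖` by `1/3`, which is absurd.

The Runge step approximates a rational function whose poles lie on the imaginary axis, pushing
each pole along the axis to infinity.
-/

open Set

/-- The polynomial hull of a compact subset of `ℂ^N`. -/
def polyHull (N : ℕ) (K : Set (EuclideanSpace ℂ (Fin N))) : Set (EuclideanSpace ℂ (Fin N)) :=
  {z | ∀ P : MvPolynomial (Fin N) ℂ, ∀ M : ℝ,
    (∀ w ∈ K, ‖MvPolynomial.eval (fun i => w i) P‖ ≤ M) →
      ‖MvPolynomial.eval (fun i => z i) P‖ ≤ M}

open Polynomial

section PolyApprox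

variable {S : Set ℂ}

lemma Polynomial.exists_norm_eval_le_of_isBounded (hS : Bornology.IsBounded S) (p : ℂ[X]) :
    ∃ C, ∀ ζ ∈ S, ‖p.eval ζ‖ ≤ C := by
  obtain ⟨C, hC⟩ := hS.isCompact_closure.exists_bound_of_continuousOn p.continuous.continuousOn
  exact ⟨C, fun ζ hζ => hC ζ (subset_closure hζ)⟩

lemma exists_norm_le_of_forall_approx (hS : Bornology.IsBounded S) {g : ℂ → ℂ}
    (hg : ∀ η > 0, ∃ p : ℂ[X], ∀ ζ ∈ S, ‖g ζ - p.eval ζ‖ ≤ η) :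
    ∃ C, 0 ≤ C ∧ ∀ ζ ∈ S, ‖g ζ‖ ≤ C := by
  obtain ⟨p, hp⟩ := hg 1 one_pos
  obtain ⟨C, hC⟩ := p.exists_norm_eval_le_of_isBounded hS
  refine ⟨|C| + 1, by positivity, fun ζ hζ => ?_⟩
  calc ‖g ζ‖ ≤ ‖g ζ - p.eval ζ‖ + ‖p.eval ζ‖ := norm_le_norm_sub_add _ _
    _ ≤ 1 + |C| := add_le_add (hp ζ hζ) ((hC ζ hζ).trans (le_abs_self C))
    _ = |C| + 1 := add_comm _ _

def polyApprox (S : Set ℂ) (hS : Bornology.IsBounded S) : Subalgebra ℂ (ℂ → ℂ) where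
  carrier := {g | ∀ η > 0, ∃ p : ℂ[X], ∀ ζ ∈ S, ‖g ζ - p.eval ζ‖ ≤ η}
  algebraMap_mem' c η hη := ⟨C c, fun ζ _ => by simpa using hη.le⟩
  add_mem' {g h} hg hh η hη := by
    obtain ⟨p, hp⟩ := hg (η / 2) (by positivity)
    obtain ⟨q, hq⟩ := hh (η / 2) (by positivity)
    refine ⟨p + q, fun ζ hζ => ?_⟩
    calc ‖(g + h) ζ - (p + q).eval ζ‖ = ‖(g ζ - p.eval ζ) + (h ζ - q.eval ζ)‖ := by
          simp only [Pi.add_apply, eval_add]; ring_nf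
      _ ≤ η / 2 + η / 2 := (norm_add_le _ _).trans (add_le_add (hp ζ hζ) (hq ζ hζ))
      _ = η := add_halves η
  mul_mem' {g h} hg hh η hη := by
    obtain ⟨Cg, hCg0, hCg⟩ := exists_norm_le_of_forall_approx hS hg
    obtain ⟨Ch, hCh0, hCh⟩ := exists_norm_le_of_forall_approx hS hh
    set t := min 1 (η / (Cg + Ch + 1))
    have ht : 0 < t := lt_min one_pos (by positivity)
    obtain ⟨p, hp⟩ := hg t ht
    obtain ⟨q, hq⟩ := hh t ht
    refine ⟨p * q, fun ζ hζ => ?_⟩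
    have hsplit : (g * h) ζ - (p * q).eval ζ = g ζ * (h ζ - q.eval ζ)
        + (g ζ - p.eval ζ) * h ζ - (g ζ - p.eval ζ) * (h ζ - q.eval ζ) := by
      simp only [Pi.mul_apply, eval_mul]; ring
    have htt : t * t ≤ t := mul_le_of_le_one_left ht.le (min_le_left _ _)
    have htη : (Cg + Ch + 1) * t ≤ η := by
      rw [← le_div_iff₀' (by positivity)]; exact min_le_right _ _
    rw [hsplit]
    refine (norm_sub_le _ _).trans ((add_le_add (norm_add_le _ _) le_rfl).trans ?_)
    simp only [norm_mul]
    have e1 := mul_le_mul (hCg ζ hζ) (hq ζ hζ) (norm_nonneg _) hCg0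
    have e2 := mul_le_mul (hp ζ hζ) (hCh ζ hζ) (norm_nonneg _) ht.le
    have e3 := mul_le_mul (hp ζ hζ) (hq ζ hζ) (norm_nonneg _) ht.le
    nlinarith

variable {hS : Bornology.IsBounded S}

lemma mem_polyApprox_iff {g : ℂ → ℂ} :
    g ∈ polyApprox S hS ↔ ∀ η > 0, ∃ p : ℂ[X], ∀ ζ ∈ S, ‖g ζ - p.eval ζ‖ ≤ η :=
  Iff.rfl

lemma eval_mem_polyApprox (p : ℂ[X]) : (fun ζ => p.eval ζ) ∈ polyApprox S hS :=
  fun η hη => ⟨p, fun ζ _ => by simpa using hη.le⟩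

lemma mem_polyApprox_of_eqOn {g h : ℂ → ℂ} (hg : g ∈ polyApprox S hS) (hgh : EqOn g h S) :
    h ∈ polyApprox S hS := fun η hη =>
  let ⟨p, hp⟩ := hg η hη
  ⟨p, fun ζ hζ => hgh hζ ▸ hp ζ hζ⟩

lemma mem_polyApprox_of_forall_approx {g : ℂ → ℂ}
    (hg : ∀ η > 0, ∃ h ∈ polyApprox S hS, ∀ ζ ∈ S, ‖g ζ - h ζ‖ ≤ η) :
    g ∈ polyApprox S hS := by
  intro η hη
  obtain ⟨h, hh, hgh⟩ := hg (η / 2) (by positivity)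
  obtain ⟨p, hp⟩ := hh (η / 2) (by positivity)
  refine ⟨p, fun ζ hζ => ?_⟩
  calc ‖g ζ - p.eval ζ‖ ≤ ‖g ζ - h ζ‖ + ‖h ζ - p.eval ζ‖ := norm_sub_le_norm_sub_add_norm_sub _ _ _
    _ ≤ η / 2 + η / 2 := add_le_add (hgh ζ hζ) (hp ζ hζ)
    _ = η := add_halves η

lemma inv_one_sub_mem_polyApprox {u : ℂ → ℂ} (hu : u ∈ polyApprox S hS)
    (hu2 : ∀ ζ ∈ S, ‖u ζ‖ ≤ 1 / 2) : (fun ζ => (1 - u ζ)⁻¹) ∈ polyApprox S hS := by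
  refine mem_polyApprox_of_forall_approx fun η hη => ?_
  obtain ⟨m, hm⟩ := exists_pow_lt_of_lt_one (half_pos hη) (by norm_num : (1 / 2 : ℝ) < 1)
  refine ⟨∑ k ∈ Finset.range m, u ^ k,
    Subalgebra.sum_mem _ fun k _ => Subalgebra.pow_mem _ hu k, fun ζ hζ => ?_⟩
  set x := u ζ
  have hx : ‖x‖ ≤ 1 / 2 := hu2 ζ hζ
  have h1x : 1 / 2 ≤ ‖1 - x‖ := by
    have := norm_sub_norm_le (1 : ℂ) x
    rw [norm_one] at this; linarith
  have h1x0 : 1 - x ≠ 0 := norm_pos_iff.mp (by linarith)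
  have hgeom : (1 - x)⁻¹ - ∑ k ∈ Finset.range m, x ^ k = x ^ m / (1 - x) := by
    rw [eq_div_iff h1x0, sub_mul, inv_mul_cancel₀ h1x0, mul_comm _ (1 - x), mul_neg_geom_sum]
    ring
  simp only [Finset.sum_apply, Pi.pow_apply]
  rw [hgeom, norm_div, norm_pow, div_le_iff₀ (by linarith)]
  calc ‖x‖ ^ m ≤ (1 / 2) ^ m := pow_le_pow_left₀ (norm_nonneg _) hx m
    _ ≤ η * (1 / 2) := by linarith
    _ ≤ η * ‖1 - x‖ := by gcongr

lemma inv_sub_mem_polyApprox_of_far {a : ℂ} (ha : a ≠ 0) (hfar : ∀ ζ ∈ S, 2 * ‖ζ‖ ≤ ‖a‖) :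
    (fun ζ => (ζ - a)⁻¹) ∈ polyApprox S hS := by
  have hu : (fun ζ => a⁻¹ * ζ) ∈ polyApprox S hS :=
    mem_polyApprox_of_eqOn (eval_mem_polyApprox (C a⁻¹ * X)) fun ζ _ => by simp
  have hu2 : ∀ ζ ∈ S, ‖a⁻¹ * ζ‖ ≤ 1 / 2 := fun ζ hζ => by
    rw [norm_mul, norm_inv, inv_mul_le_iff₀ (norm_pos_iff.mpr ha)]; linarith [hfar ζ hζ]
  refine mem_polyApprox_of_eqOn (Subalgebra.smul_mem _ (inv_one_sub_mem_polyApprox hu hu2) (-a⁻¹))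
    fun ζ _ => ?_
  have : -a * (1 - a⁻¹ * ζ) = ζ - a := by field_simp; ring
  simp only [Pi.smul_apply, smul_eq_mul, ← this, mul_inv, inv_neg]

lemma inv_sub_mem_polyApprox_of_near {a b : ℂ} (hb : (fun ζ => (ζ - b)⁻¹) ∈ polyApprox S hS)
    (hab : ∀ ζ ∈ S, 2 * ‖a - b‖ ≤ ‖ζ - b‖) : (fun ζ => (ζ - a)⁻¹) ∈ polyApprox S hS := by
  have hu2 : ∀ ζ ∈ S, ‖(a - b) * (ζ - b)⁻¹‖ ≤ 1 / 2 := fun ζ hζ => by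
    rw [norm_mul, norm_inv]
    rcases (norm_nonneg (ζ - b)).eq_or_lt with h | h
    · simp [← h]
    · rw [mul_inv_le_iff₀ h]; linarith [hab ζ hζ]
  refine mem_polyApprox_of_eqOn
    (Subalgebra.mul_mem _ hb (inv_one_sub_mem_polyApprox (Subalgebra.smul_mem _ hb (a - b)) hu2))
    fun ζ hζ => ?_
  have : (ζ - b) * (1 - (a - b) * (ζ - b)⁻¹) = ζ - a := by
    by_cases hζb : ζ - b = 0
    · have hab0 : a - b = 0 := by
        have := hab ζ hζ
        rw [hζb, norm_zero] at this
        exact norm_eq_zero.mp (by linarith [norm_nonneg (a - b)])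
      rw [hζb, zero_mul]; linear_combination hab0 - hζb
    · field_simp; ring
  simp only [Pi.mul_apply, Pi.smul_apply, smul_eq_mul, ← this, mul_inv]

/-- Runge's pole pushing: the pole is moved up the imaginary axis, which stays at distance `ε`
from `S`, in steps of `ε / 2` until it is far from `S`. -/
lemma inv_sub_mem_polyApprox_of_re_eq_zero {ε R : ℝ} (hε : 0 < ε) (hR : 0 < R)
    (hSR : ∀ ζ ∈ S, ‖ζ‖ ≤ R ∧ ε ≤ |ζ.re|) {a : ℂ} (ha : a.re = 0) :
    (fun ζ => (ζ - a)⁻¹) ∈ polyApprox S hS := by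
  have hre : ∀ ζ ∈ S, ∀ y : ℝ, ε ≤ ‖ζ - y * Complex.I‖ := fun ζ hζ y =>
    (hSR ζ hζ).2.trans (by simpa using Complex.abs_re_le_norm (ζ - y * Complex.I))
  have hpush : ∀ k : ℕ, ∀ y : ℝ, 2 * R ≤ y + k * (ε / 2) →
      (fun ζ => (ζ - y * Complex.I)⁻¹) ∈ polyApprox S hS := by
    intro k
    induction k with
    | zero =>
      intro y hy
      have hy' : 2 * R ≤ ‖(y : ℂ) * Complex.I‖ := by simp; linarith [le_abs_self y]
      refine inv_sub_mem_polyApprox_of_far (norm_pos_iff.mp (by linarith)) fun ζ hζ => ?_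
      linarith [(hSR ζ hζ).1]
    | succ k ih =>
      intro y hy
      refine inv_sub_mem_polyApprox_of_near (ih (y + ε / 2) (by push_cast at hy; linarith))
        fun ζ hζ => ?_
      have : ‖(y : ℂ) * Complex.I - ↑(y + ε / 2) * Complex.I‖ = ε / 2 := by
        rw [← sub_mul, ← Complex.ofReal_sub, norm_mul, Complex.norm_I, mul_one, Complex.norm_real,
          Real.norm_eq_abs, sub_add_cancel_left, abs_neg, abs_of_pos (half_pos hε)]
      linarith [hre ζ hζ (y + ε / 2)]
  obtain ⟨k, hk⟩ := exists_nat_ge ((2 * R - a.im) / (ε / 2))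
  have ha' : a = a.im * Complex.I := Complex.ext (by simp [ha]) (by simp)
  rw [ha']
  exact hpush k a.im (by rw [div_le_iff₀ (by positivity)] at hk; linarith)

lemma inv_eval_mem_polyApprox {D : ℂ[X]}
    (hroots : ∀ r ∈ D.roots, (fun ζ => (ζ - r)⁻¹) ∈ polyApprox S hS) :
    (fun ζ => (D.eval ζ)⁻¹) ∈ polyApprox S hS := by
  have hprod := Subalgebra.multiset_prod_mem (polyApprox S hS)
    (m := D.roots.map fun r ζ => (ζ - r)⁻¹) fun _ hf => by
      obtain ⟨r, hr, rfl⟩ := Multiset.mem_map.mp hf; exact hroots r hr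
  refine mem_polyApprox_of_eqOn (Subalgebra.smul_mem _ hprod D.leadingCoeff⁻¹) fun ζ _ => ?_
  simp [(IsAlgClosed.splits D).eval_eq_prod_roots, Pi.multiset_prod_apply, Multiset.prod_map_inv,
    mul_comm]

end PolyApprox

lemma Complex.norm_sub_one_sq (ζ : ℂ) : ‖ζ - 1‖ ^ 2 = ‖ζ + 1‖ ^ 2 - 4 * ζ.re := by
  simp only [Complex.sq_norm, Complex.normSq_apply, Complex.sub_re, Complex.sub_im,
    Complex.add_re, Complex.add_im, Complex.one_re, Complex.one_im]
  ring

lemma Complex.re_eq_zero_of_sub_one_pow_eq {n : ℕ} (hn : n ≠ 0) {ζ : ℂ}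
    (h : (ζ - 1) ^ n = (ζ + 1) ^ n) : ζ.re = 0 := by
  have h' : ‖ζ - 1‖ = ‖ζ + 1‖ := by
    rw [← pow_left_inj₀ (norm_nonneg _) (norm_nonneg _) hn, ← norm_pow, ← norm_pow, h]
  have := ζ.norm_sub_one_sq
  rw [h'] at this
  linarith

lemma Complex.norm_sub_one_le {ε R : ℝ} (hε : 0 ≤ ε) {ζ : ℂ} (hR : ‖ζ‖ ≤ R) (hre : ε ≤ ζ.re) :
    ‖ζ - 1‖ ≤ (1 - 2 * ε / (R + 1) ^ 2) * ‖ζ + 1‖ := by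
  have hR0 : 0 ≤ R := (norm_nonneg ζ).trans hR
  have hεR : ε ≤ R := hre.trans ((Complex.re_le_norm ζ).trans hR)
  have hζ1 : ‖ζ + 1‖ ≤ R + 1 := (norm_add_le _ _).trans (by simpa using hR)
  set c := 2 * ε / (R + 1) ^ 2
  have hc : c * (R + 1) ^ 2 = 2 * ε := div_mul_cancel₀ _ (by positivity)
  have hc0 : 0 ≤ c := by positivity
  have hc1 : c ≤ 1 := by
    rw [div_le_one (by positivity)]; nlinarith
  rw [← pow_le_pow_iff_left₀ (norm_nonneg _) (by nlinarith [norm_nonneg (ζ + 1)]) two_ne_zero,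
    ζ.norm_sub_one_sq, mul_pow]
  have : c * ‖ζ + 1‖ ^ 2 ≤ 2 * ε := by
    rw [← hc]; exact mul_le_mul_of_nonneg_left (pow_le_pow_left₀ (norm_nonneg _) hζ1 2) hc0
  nlinarith [sq_nonneg c, sq_nonneg ‖ζ + 1‖]

lemma norm_div_sub_le {x y : ℂ} {q : ℝ} (hq0 : 0 ≤ q) (hq : q ≤ 1 / 2) (hxy : ‖x‖ ≤ q * ‖y‖) :
    ‖x / (x - y)‖ ≤ 2 * q := by
  rcases eq_or_ne y 0 with rfl | hy
  · have : x = 0 := norm_le_zero_iff.mp (by simpa using hxy)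
    simp [this, hq0]
  have hy0 := norm_pos_iff.mpr hy
  have hxy' : ‖y‖ - ‖x‖ ≤ ‖x - y‖ := by
    rw [norm_sub_rev]; exact norm_sub_norm_le y x
  rw [norm_div, div_le_iff₀ (by nlinarith [mul_le_mul_of_nonneg_right hq hy0.le])]
  nlinarith [mul_le_mul_of_nonneg_left hxy' (by positivity : 0 ≤ 2 * q),
    mul_le_mul_of_nonneg_left hxy hq0,
    mul_nonneg (mul_nonneg hq0 (by linarith : 0 ≤ 1 - 2 * q)) hy0.le]

/-- `wⁿ / (wⁿ - 1)` for the Cayley transform `w = (ζ - 1) / (ζ + 1)`: as `n → ∞` it tends to `0`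
on the right half-plane, where `‖w‖ < 1`, and to `1` on the left one, where `‖w‖ > 1`. -/
noncomputable def cayleyIndicator (n : ℕ) (ζ : ℂ) : ℂ :=
  (ζ - 1) ^ n / ((ζ - 1) ^ n - (ζ + 1) ^ n)

lemma norm_cayleyIndicator_le {n : ℕ} {ρ : ℝ} (hρ0 : 0 ≤ ρ) (hρn : ρ ^ n ≤ 1 / 2) {ζ : ℂ}
    (hζ : ‖ζ - 1‖ ≤ ρ * ‖ζ + 1‖) : ‖cayleyIndicator n ζ‖ ≤ 2 * ρ ^ n := by
  refine norm_div_sub_le (by positivity) hρn ?_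
  rw [norm_pow, norm_pow, ← mul_pow]
  exact pow_le_pow_left₀ (norm_nonneg _) hζ n

lemma norm_cayleyIndicator_sub_one_le {n : ℕ} (hn : n ≠ 0) {ρ : ℝ} (hρ0 : 0 ≤ ρ)
    (hρn : ρ ^ n ≤ 1 / 2) {ζ : ℂ} (hre : ζ.re ≠ 0) (hζ : ‖ζ + 1‖ ≤ ρ * ‖ζ - 1‖) :
    ‖cayleyIndicator n ζ - 1‖ ≤ 2 * ρ ^ n := by
  have hD : (ζ - 1) ^ n - (ζ + 1) ^ n ≠ 0 := fun h =>
    hre (Complex.re_eq_zero_of_sub_one_pow_eq hn (sub_eq_zero.mp h))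
  rw [cayleyIndicator, div_sub_one hD, sub_sub_cancel, norm_div, norm_sub_rev, ← norm_div]
  refine norm_div_sub_le (by positivity) hρn ?_
  rw [norm_pow, norm_pow, ← mul_pow]
  exact pow_le_pow_left₀ (norm_nonneg _) hζ n

lemma cayleyIndicator_mem_polyApprox {S : Set ℂ} {hS : Bornology.IsBounded S} {ε R : ℝ}
    (hε : 0 < ε) (hR : 0 < R) (hSR : ∀ ζ ∈ S, ‖ζ‖ ≤ R ∧ ε ≤ |ζ.re|) {n : ℕ} (hn : n ≠ 0) :
    cayleyIndicator n ∈ polyApprox S hS := by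
  set D : ℂ[X] := (X - 1) ^ n - (X + 1) ^ n
  have hD : ∀ ζ, D.eval ζ = (ζ - 1) ^ n - (ζ + 1) ^ n := fun ζ => by simp [D]
  have hroots : ∀ r ∈ D.roots, r.re = 0 := fun r hr => Complex.re_eq_zero_of_sub_one_pow_eq hn
    (sub_eq_zero.mp ((hD r).symm.trans (isRoot_of_mem_roots hr)))
  refine mem_polyApprox_of_eqOn (Subalgebra.mul_mem _ (eval_mem_polyApprox ((X - 1) ^ n))
    (inv_eval_mem_polyApprox fun r hr =>
      inv_sub_mem_polyApprox_of_re_eq_zero hε hR hSR (hroots r hr))) fun ζ _ => ?_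
  simp [cayleyIndicator, hD, div_eq_mul_inv]

theorem exists_poly_near_indicator {ε R δ : ℝ} (hε : 0 < ε) (hεR : ε ≤ R) (hδ : 0 < δ) :
    ∃ f : ℂ[X], ∀ ζ : ℂ, ‖ζ‖ ≤ R →
      (ζ.re ≤ -ε → ‖f.eval ζ - 1‖ ≤ δ) ∧ (ε ≤ ζ.re → ‖f.eval ζ‖ ≤ δ) := by
  have hR1 : 0 < (R + 1) ^ 2 := pow_pos (by linarith) 2
  set ρ := 1 - 2 * ε / (R + 1) ^ 2
  have hρ0 : 0 ≤ ρ := by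
    rw [sub_nonneg, div_le_one hR1]; nlinarith
  have hρ1 : ρ < 1 := sub_lt_self _ (div_pos (by linarith) hR1)
  obtain ⟨m, hm⟩ := exists_pow_lt_of_lt_one (lt_min one_half_pos (by positivity : 0 < δ / 4)) hρ1
  have hq : ρ ^ (m + 1) ≤ min (1 / 2) (δ / 4) :=
    (pow_le_pow_of_le_one hρ0 hρ1.le (Nat.le_succ m)).trans hm.le
  have hq2 := hq.trans (min_le_left _ _)
  have hqδ := hq.trans (min_le_right _ _)
  set S := {ζ : ℂ | ‖ζ‖ ≤ R ∧ ε ≤ |ζ.re|}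
  have hS : Bornology.IsBounded S :=
    (Metric.isBounded_closedBall (x := 0) (r := R)).subset fun ζ hζ => by simpa using hζ.1
  obtain ⟨f, hf⟩ := mem_polyApprox_iff.mp (cayleyIndicator_mem_polyApprox (hS := hS) hε
    (hε.trans_le hεR) (fun ζ hζ => hζ) m.add_one_ne_zero) (δ / 2) (by positivity)
  have hfS : ∀ ζ, ‖ζ‖ ≤ R → ε ≤ |ζ.re| → ‖f.eval ζ - cayleyIndicator (m + 1) ζ‖ ≤ δ / 2 :=
    fun ζ hζR hζre => norm_sub_rev (cayleyIndicator _ ζ) _ ▸ hf ζ ⟨hζR, hζre⟩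
  refine ⟨f, fun ζ hζR => ⟨fun hre => ?_, fun hre => ?_⟩⟩
  · have hζ := Complex.norm_sub_one_le hε.le (ζ := -ζ) (by simpa using hζR) (by linarith [ζ.neg_re])
    rw [show -ζ - 1 = -(ζ + 1) by ring, show -ζ + 1 = -(ζ - 1) by ring, norm_neg, norm_neg] at hζ
    calc ‖f.eval ζ - 1‖
        ≤ ‖f.eval ζ - cayleyIndicator (m + 1) ζ‖ + ‖cayleyIndicator (m + 1) ζ - 1‖ :=
          norm_sub_le_norm_sub_add_norm_sub _ _ _
      _ ≤ δ / 2 + 2 * ρ ^ (m + 1) := add_le_add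
          (hfS ζ hζR (by rw [abs_of_neg (by linarith)]; linarith))
          (norm_cayleyIndicator_sub_one_le m.add_one_ne_zero hρ0 hq2 (by linarith) hζ)
      _ ≤ δ := by linarith
  · calc ‖f.eval ζ‖ ≤ ‖f.eval ζ - cayleyIndicator (m + 1) ζ‖ + ‖cayleyIndicator (m + 1) ζ‖ :=
          norm_le_norm_sub_add _ _
      _ ≤ δ / 2 + 2 * ρ ^ (m + 1) := add_le_add
          (hfS ζ hζR (by rw [abs_of_pos (by linarith)]; linarith))
          (norm_cayleyIndicator_le hρ0 hq2 (Complex.norm_sub_one_le hε.le hζR hre))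
      _ ≤ δ := by linarith

section PolyHull

variable {N : ℕ}

lemma subset_polyHull (K : Set (EuclideanSpace ℂ (Fin N))) : K ⊆ polyHull N K :=
  fun z hz _ _ h => h z hz

lemma polyHull_empty : polyHull N ∅ = ∅ :=
  eq_empty_of_forall_notMem fun z hz => absurd (hz 1 0 (by simp)) (by simp)

lemma MvPolynomial.continuous_eval_euclideanSpace (P : MvPolynomial (Fin N) ℂ) :
    Continuous fun w : EuclideanSpace ℂ (Fin N) => MvPolynomial.eval (fun i => w i) P :=
  (MvPolynomial.continuous_eval P).comp (PiLp.continuous_ofLp 2 _)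

lemma MvPolynomial.eval_polynomial_aeval (x : Fin N → ℂ) (L : MvPolynomial (Fin N) ℂ) (f : ℂ[X]) :
    MvPolynomial.eval x (Polynomial.aeval L f) = f.eval (MvPolynomial.eval x L) := by
  simpa [MvPolynomial.coe_aeval_eq_eval] using (aeval_algHom_apply (MvPolynomial.aeval x) L f).symm

/-- A real linear functional on `ℂ^N` is the real part of a complex linear one. -/
lemma exists_mvPolynomial_re_eval_eq (φ : EuclideanSpace ℂ (Fin N) →ₗ[ℝ] ℝ) (t : ℝ) :
    ∃ L : MvPolynomial (Fin N) ℂ, ∀ w : EuclideanSpace ℂ (Fin N),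
      (MvPolynomial.eval (fun i => w i) L).re = φ w - t := by
  set ψ : Module.Dual ℂ (EuclideanSpace ℂ (Fin N)) := Module.Dual.extendRCLike φ
  set b := EuclideanSpace.basisFun (Fin N) ℂ
  refine ⟨∑ j, MvPolynomial.C (ψ (b j)) * MvPolynomial.X j - MvPolynomial.C (t : ℂ), fun w => ?_⟩
  have hψ : ψ w = ∑ j, ψ (b j) * w j := by
    conv_lhs => rw [← b.sum_repr w]
    simp [b, mul_comm]
  have hre : (ψ w).re = φ w := Module.Dual.re_extendRCLike_apply (𝕜 := ℂ) φ w
  simp only [map_sub, map_sum, map_mul, MvPolynomial.eval_C, MvPolynomial.eval_X, ← hψ,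
    Complex.sub_re, Complex.ofReal_re, hre]

lemma exists_eval_eq_one_of_notMem_polyHull {K : Set (EuclideanSpace ℂ (Fin N))}
    {z : EuclideanSpace ℂ (Fin N)} (hz : z ∉ polyHull N K) :
    ∃ P : MvPolynomial (Fin N) ℂ, MvPolynomial.eval (fun i => z i) P = 1 ∧
      ∀ w ∈ K, ‖MvPolynomial.eval (fun i => w i) P‖ ≤ 1 / 4 := by
  rcases K.eq_empty_or_nonempty with rfl | ⟨w₀, hw₀⟩
  · exact ⟨1, by simp, by simp⟩
  simp only [polyHull, mem_ofPred_eq, not_forall, not_le, exists_prop] at hz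
  obtain ⟨P, M, hPK, hMz⟩ := hz
  set c := MvPolynomial.eval (fun i => z i) P
  have hc : 0 < ‖c‖ := ((norm_nonneg _).trans (hPK w₀ hw₀)).trans_lt hMz
  have ht : M / ‖c‖ < 1 := (div_lt_one hc).mpr hMz
  obtain ⟨k, hk⟩ := exists_pow_lt_of_lt_one (by norm_num : (0 : ℝ) < 1 / 4) ht
  -- normalize `P` at `z`, then take a power to push its size on `K` below `1 / 4`
  refine ⟨(MvPolynomial.C c⁻¹ * P) ^ k, ?_, fun w hw => ?_⟩
  · rw [map_pow, map_mul, MvPolynomial.eval_C, inv_mul_cancel₀ (norm_pos_iff.mp hc), one_pow]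
  rw [map_pow, map_mul, MvPolynomial.eval_C, norm_pow, norm_mul, norm_inv, inv_mul_eq_div]
  exact (pow_le_pow_left₀ (by positivity) (div_le_div_of_nonneg_right (hPK w hw) hc.le) k).trans
    hk.le

lemma exists_mvPolynomial_near_indicator {A B : Set (EuclideanSpace ℂ (Fin N))}
    (hAc : IsCompact A) (hBc : IsCompact B) {L : MvPolynomial (Fin N) ℂ}
    (hLA : ∀ w ∈ A, (MvPolynomial.eval (fun i => w i) L).re < 0)
    (hLB : ∀ w ∈ B, 0 < (MvPolynomial.eval (fun i => w i) L).re) {δ : ℝ} (hδ : 0 < δ) :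
    ∃ Q : MvPolynomial (Fin N) ℂ, (∀ w ∈ A, ‖MvPolynomial.eval (fun i => w i) Q - 1‖ ≤ δ) ∧
      ∀ w ∈ B, ‖MvPolynomial.eval (fun i => w i) Q‖ ≤ δ := by
  have hL := L.continuous_eval_euclideanSpace
  have hre : Continuous fun w : EuclideanSpace ℂ (Fin N) =>
      (MvPolynomial.eval (fun i => w i) L).re :=
    Complex.continuous_re.comp hL
  obtain ⟨εA, hεA, hA⟩ := hAc.exists_forall_le' hre.neg.continuousOn (a := 0)
    fun w hw => neg_pos.mpr (hLA w hw)
  simp only [Pi.neg_apply] at hA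
  obtain ⟨εB, hεB, hB⟩ := hBc.exists_forall_le' hre.continuousOn (a := 0) hLB
  obtain ⟨R, hR⟩ := (hAc.union hBc).exists_bound_of_continuousOn hL.continuousOn
  obtain ⟨f, hf⟩ := exists_poly_near_indicator (lt_min hεA hεB) (le_max_right R _) hδ
  refine ⟨aeval L f, fun w hw => ?_, fun w hw => ?_⟩ <;> rw [MvPolynomial.eval_polynomial_aeval]
  · refine (hf _ ((hR w (Or.inl hw)).trans (le_max_left _ _))).1 ?_
    linarith [hA w hw, min_le_left εA εB]
  · refine (hf _ ((hR w (Or.inr hw)).trans (le_max_left _ _))).2 ?_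
    linarith [hB w hw, min_le_right εA εB]

lemma norm_eval_le_of_mem_polyHull_union {A B : Set (EuclideanSpace ℂ (Fin N))}
    {z : EuclideanSpace ℂ (Fin N)} (hz : z ∈ polyHull N (A ∪ B)) {P Q : MvPolynomial (Fin N) ℂ}
    {C δ : ℝ} (hδ : δ ≤ 1 / 4) (hCδ : C * δ ≤ 1 / 4) (hPz : MvPolynomial.eval (fun i => z i) P = 1)
    (hPA : ∀ w ∈ A, ‖MvPolynomial.eval (fun i => w i) P‖ ≤ 1 / 4)
    (hPB : ∀ w ∈ B, ‖MvPolynomial.eval (fun i => w i) P‖ ≤ C)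
    (hQA : ∀ w ∈ A, ‖MvPolynomial.eval (fun i => w i) Q - 1‖ ≤ δ)
    (hQB : ∀ w ∈ B, ‖MvPolynomial.eval (fun i => w i) Q‖ ≤ δ) :
    ‖MvPolynomial.eval (fun i => z i) Q‖ ≤ 1 / 3 := by
  have h := hz (P * Q) (1 / 3) fun w hw => by
    rw [map_mul, norm_mul]
    rcases hw with hw | hw
    · have hQ := norm_le_norm_sub_add (MvPolynomial.eval (fun i => w i) Q) 1
      rw [norm_one] at hQ
      replace hQ : ‖MvPolynomial.eval (fun i => w i) Q‖ ≤ 1 + δ := by linarith [hQA w hw]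
      nlinarith [mul_le_mul (hPA w hw) hQ (norm_nonneg _) (by norm_num)]
    · have hC := (norm_nonneg _).trans (hPB w hw)
      nlinarith [mul_le_mul (hPB w hw) (hQB w hw) (norm_nonneg _) hC]
  rwa [map_mul, hPz, one_mul] at h

/-- Kallin's lemma. -/
theorem polyHull_union_eq_of_re_separated {A B : Set (EuclideanSpace ℂ (Fin N))}
    (hAc : IsCompact A) (hBc : IsCompact B) (hA : polyHull N A = A) (hB : polyHull N B = B)
    (L : MvPolynomial (Fin N) ℂ) (hLA : ∀ w ∈ A, (MvPolynomial.eval (fun i => w i) L).re < 0)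
    (hLB : ∀ w ∈ B, 0 < (MvPolynomial.eval (fun i => w i) L).re) :
    polyHull N (A ∪ B) = A ∪ B := by
  refine (subset_polyHull _).antisymm' fun z hz => ?_
  by_contra hzAB
  obtain ⟨P₁, hP₁z, hP₁A⟩ :=
    exists_eval_eq_one_of_notMem_polyHull (hA.symm ▸ fun h => hzAB (Or.inl h))
  obtain ⟨P₂, hP₂z, hP₂B⟩ :=
    exists_eval_eq_one_of_notMem_polyHull (hB.symm ▸ fun h => hzAB (Or.inr h))
  obtain ⟨C₁, hC₁⟩ :=
    hBc.exists_bound_of_continuousOn P₁.continuous_eval_euclideanSpace.continuousOn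
  obtain ⟨C₂, hC₂⟩ :=
    hAc.exists_bound_of_continuousOn P₂.continuous_eval_euclideanSpace.continuousOn
  set C := max (max C₁ C₂) 0
  have hC : 0 ≤ C := le_max_right _ _
  set δ := 1 / (4 * (C + 1))
  have hδ : δ ≤ 1 / 4 := by
    rw [div_le_div_iff₀ (by positivity) (by norm_num)]; linarith
  have hCδ : C * δ ≤ 1 / 4 := by
    rw [mul_one_div, div_le_div_iff₀ (by positivity) (by norm_num)]; linarith
  obtain ⟨Q, hQA, hQB⟩ :=
    exists_mvPolynomial_near_indicator hAc hBc hLA hLB (δ := δ) (by positivity)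
  -- `Q` is close to the indicator of `A`, so by the choice of `P₁` and `P₂` its value at `z` can
  -- be close neither to `0` nor to `1`
  have h₁ := norm_eval_le_of_mem_polyHull_union hz hδ hCδ hP₁z hP₁A
    (fun w hw => (hC₁ w hw).trans ((le_max_left _ _).trans (le_max_left _ _))) hQA hQB
  have h₂ := norm_eval_le_of_mem_polyHull_union (Q := 1 - Q) (union_comm A B ▸ hz) hδ hCδ hP₂z hP₂B
    (fun w hw => (hC₂ w hw).trans ((le_max_right _ _).trans (le_max_left _ _)))
    (fun w hw => by simpa using hQB w hw) (fun w hw => by simpa [norm_sub_rev] using hQA w hw)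
  rw [map_sub, map_one] at h₂
  have h := norm_add_le (MvPolynomial.eval (fun i => z i) Q)
    (1 - MvPolynomial.eval (fun i => z i) Q)
  rw [add_sub_cancel, norm_one] at h
  linarith

theorem polyHull_iUnion_eq_of_re_separated {n : ℕ} (K : Fin n → Set (EuclideanSpace ℂ (Fin N)))
    (hKc : ∀ i, IsCompact (K i)) (hKpc : ∀ i, polyHull N (K i) = K i)
    (hsep : ∀ i, ∃ L : MvPolynomial (Fin N) ℂ,
      (∀ x ∈ K i, (MvPolynomial.eval (fun j => x j) L).re < 0) ∧
      ∀ y ∈ ⋃ j : Fin n, ⋃ _ : j < i, K j, 0 < (MvPolynomial.eval (fun j => y j) L).re) :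
    polyHull N (⋃ i, K i) = ⋃ i, K i := by
  suffices h : ∀ m ≤ n, polyHull N (⋃ j : Fin n, ⋃ _ : (j : ℕ) < m, K j) =
      ⋃ j : Fin n, ⋃ _ : (j : ℕ) < m, K j by
    simpa using h n le_rfl
  intro m hm
  induction m with
  | zero => simp [polyHull_empty]
  | succ m ih =>
    have hU : ⋃ j : Fin n, ⋃ _ : (j : ℕ) < m + 1, K j =
        K ⟨m, hm⟩ ∪ ⋃ j : Fin n, ⋃ _ : (j : ℕ) < m, K j := by
      ext x
      simp only [mem_iUnion, mem_union, exists_prop, Nat.lt_succ_iff_lt_or_eq, or_and_right,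
        exists_or]
      rw [or_comm]
      congr! 1
      refine ⟨fun ⟨j, hj, hx⟩ => ?_, fun hx => ⟨_, rfl, hx⟩⟩
      obtain rfl : j = ⟨m, hm⟩ := Fin.ext hj
      exact hx
    obtain ⟨L, hLA, hLB⟩ := hsep ⟨m, hm⟩
    rw [hU]
    exact polyHull_union_eq_of_re_separated (hKc _)
      (isCompact_iUnion fun j => isCompact_iUnion fun _ => hKc j) (hKpc _) (ih (by omega)) L hLA hLB

end PolyHull

/-- If each compact polynomially convex set `K i` is separated by a real affine hyperplane
from the union of the previous ones, then the total union is polynomially convex. -/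
theorem union_polynomially_convex_of_hyperplane_separated (N n : ℕ)
    (K : Fin n → Set (EuclideanSpace ℂ (Fin N)))
    (hKc : ∀ i, IsCompact (K i)) (hKpc : ∀ i, polyHull N (K i) = K i)
    (hsep : ∀ i : Fin n, ∃ φ : EuclideanSpace ℂ (Fin N) →ₗ[ℝ] ℝ, φ ≠ 0 ∧ ∃ t : ℝ,
      (∀ x ∈ K i, φ x < t) ∧ (∀ y ∈ ⋃ j : Fin n, ⋃ _ : j < i, K j, t < φ y)) :
    polyHull N (⋃ i, K i) = ⋃ i, K i := by
  refine polyHull_iUnion_eq_of_re_separated K hKc hKpc fun i => ?_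
  obtain ⟨φ, -, t, hφK, hφU⟩ := hsep i
  obtain ⟨L, hL⟩ := exists_mvPolynomial_re_eval_eq φ t
  exact ⟨L, fun x hx => by rw [hL]; linarith [hφK x hx],
    fun y hy => by rw [hL]; linarith [hφU y hy]⟩
end
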